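/- arXiv:1510.05831 — 3 statements merged into one kernel-verified Lean document; each statement's English description precedes it below -/
import Mathlib

section
/- The spectrum of A equals K; that is, σ(A) = {z ∈ ℂ : |z − 1| ≤ 1/2}. -/
noncomputable section

open Metric

/-- The closed disk of radius 1/2 centered at 1 in ℂ. -/
def K : Set ℂ := Metric.closedBall 1 (1/2)

instance : CompactSpace K :=
  isCompact_iff_compactSpace.mp (isCompact_closedBall 1 (1/2))

open scoped Classical in
/-- Extension of a continuous function on K to ℂ by 0. -/
def extendFn (f : C(K, ℂ)) : ℂ → ℂ := fun z => if h : z ∈ K then f ⟨z, h⟩ else 0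

/-- The subspace of C(K, ℂ) of functions holomorphic on the interior of K. -/
def Esub : Submodule ℂ C(K, ℂ) where
  carrier := {f | DifferentiableOn ℂ (extendFn f) (interior K)}
  add_mem' := by
    intro f g hf hg
    have h : extendFn (f + g) = extendFn f + extendFn g := by
      funext z; by_cases h : z ∈ K <;> simp [extendFn, h]
    simpa [Set.mem_setOf_eq, h] using hf.add hg
  zero_mem' := by
    have h : extendFn (0 : C(K, ℂ)) = fun _ => 0 := by
      funext z; by_cases h : z ∈ K <;> simp [extendFn, h]
    simpa [Set.mem_setOf_eq, h] using differentiableOn_const (0 : ℂ)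
  smul_mem' := by
    intro c f hf
    have h : extendFn (c • f) = c • extendFn f := by
      funext z; by_cases h : z ∈ K <;> simp [extendFn, h]
    simpa [Set.mem_setOf_eq, h] using hf.const_smul c

/-- The Banach space E. -/
abbrev E : Type := ↥Esub

/-- The constant function 1 as an element of E. -/
def oneE : E :=
  ⟨1, by
    have h : ∀ z ∈ interior K, extendFn (1 : C(K, ℂ)) z = 1 := by
      intro z hz; simp [extendFn, interior_subset hz]
    exact (differentiableOn_const (1 : ℂ)).congr h⟩

/-! `A` is multiplication by the coordinate `z`. For `λ ∉ K` the function `(λ - z)⁻¹` is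
continuous on `K` and holomorphic on its interior, so multiplication by it inverts `λ - A` on `E`.
For `λ ∈ K` every function in the range of `λ - A` vanishes at `λ`, so the constant `1` is not in
that range. -/

lemma mem_Esub_of_differentiableOn {f : C(K, ℂ)} {F : ℂ → ℂ}
    (hF : DifferentiableOn ℂ F (interior K)) (hf : ∀ z : K, f z = F z) : f ∈ Esub :=
  hF.congr fun z hz => by simp [extendFn, interior_subset hz, hf]

lemma mul_mem_Esub {f g : C(K, ℂ)} (hf : f ∈ Esub) (hg : g ∈ Esub) : f * g ∈ Esub :=
  mem_Esub_of_differentiableOn (F := extendFn f * extendFn g) (hf.mul hg) fun z => by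
    simp [extendFn, z.2]

def mulLeftE (m : C(K, ℂ)) (hm : m ∈ Esub) : E →L[ℂ] E :=
  ((ContinuousLinearMap.mul ℂ C(K, ℂ) m).comp Esub.subtypeL).codRestrict Esub
    fun f => mul_mem_Esub hm f.2

@[simp]
lemma mulLeftE_apply_apply (m : C(K, ℂ)) (hm : m ∈ Esub) (f : E) (z : K) :
    (mulLeftE m hm f : C(K, ℂ)) z = m z * (f : C(K, ℂ)) z :=
  rfl

section MultiplicationByZ

variable {A : E →L[ℂ] E}
  (hA : ∀ (f : E) (z : K), ((A f : C(K, ℂ)) z) = (z : ℂ) * ((f : C(K, ℂ)) z))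
include hA

lemma smul_one_sub_apply_apply (lam : ℂ) (f : E) (z : K) :
    ((lam • (1 : E →L[ℂ] E) - A) f : C(K, ℂ)) z = (lam - z) * (f : C(K, ℂ)) z := by
  simp only [sub_apply, smul_apply, one_apply_eq_self, Submodule.coe_sub, Submodule.coe_smul,
    ContinuousMap.sub_apply, ContinuousMap.smul_apply, smul_eq_mul, hA, sub_mul]

lemma notMem_spectrum_of_notMem {lam : ℂ} (hlam : lam ∉ K) : lam ∉ spectrum ℂ A := by
  rw [spectrum.notMem_iff, Algebra.algebraMap_eq_smul_one]
  have hne : ∀ z : K, lam - z ≠ 0 := fun z h => hlam (sub_eq_zero.mp h ▸ z.2)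
  let r : C(K, ℂ) := ⟨fun z => (lam - z)⁻¹, by fun_prop (disch := exact hne)⟩
  have hr : r ∈ Esub := mem_Esub_of_differentiableOn
    (((differentiableOn_const lam).sub differentiableOn_id).inv
      fun z hz => hne ⟨z, interior_subset hz⟩) fun _ => rfl
  refine ⟨⟨_, mulLeftE r hr, ?_, ?_⟩, rfl⟩ <;> ext f z <;>
    simp only [mul_apply_eq_comp, one_apply_eq_self, smul_one_sub_apply_apply hA,
      mulLeftE_apply_apply, ← mul_assoc, ContinuousMap.coe_mk, r, mul_inv_cancel₀ (hne z),
      inv_mul_cancel₀ (hne z), one_mul]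

lemma mem_spectrum_of_mem {lam : ℂ} (hlam : lam ∈ K) : lam ∈ spectrum ℂ A := by
  rw [spectrum.mem_iff, Algebra.algebraMap_eq_smul_one]
  rintro ⟨u, hu⟩
  have h : ((lam • 1 - A) (u.inv oneE) : C(K, ℂ)) ⟨lam, hlam⟩ = 1 := by
    rw [← hu, ← mul_apply_eq_comp, u.val_inv]
    rfl
  rw [smul_one_sub_apply_apply hA, sub_self, zero_mul] at h
  exact zero_ne_one h

end MultiplicationByZ

/-- The spectrum of A equals K. -/
theorem spectrum_eq_K (A : E →L[ℂ] E)
    (hA : ∀ (f : E) (z : K), ((A f : C(K, ℂ)) z) = (z : ℂ) * ((f : C(K, ℂ)) z)) :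
    spectrum ℂ A = K := by
  ext lam
  exact ⟨fun h => by_contra fun hlam => notMem_spectrum_of_notMem hA hlam h,
    mem_spectrum_of_mem hA⟩
end
end

section
/- For every f ∈ E one has ‖f − Af‖ = (1/2)·‖f‖, where ‖·‖ is the supremum norm. (By the Maximum Modulus Principle the supremum of |(1 − z)f(z)| over K is attained on the boundary circle S = {z : |z − 1| = 1/2}, where |1 − z| = 1/2 is constant.) -/
/-! On `K` one has `(f - A f) z = (1 - z) f z` with `|1 - z| ≤ 1/2`, with equality on the boundary
circle. By the maximum modulus principle `|f|` attains its supremum on that circle, so the two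
sup norms differ by exactly the factor `1/2`. -/

noncomputable section

open Metric

theorem exists_mem_sphere_isMaxOn_norm {V F : Type*} [NormedAddCommGroup V] [NormedSpace ℂ V]
    [FiniteDimensional ℂ V] [Nontrivial V] [NormedAddCommGroup F] [NormedSpace ℂ F]
    {g : V → F} {c : V} {r : ℝ} (hr : 0 < r) (hg : DiffContOnCl ℂ g (ball c r)) :
    ∃ z ∈ sphere c r, IsMaxOn (norm ∘ g) (closedBall c r) z := by
  obtain ⟨z, hz, hmax⟩ :=
    Complex.exists_mem_frontier_isMaxOn_norm isBounded_ball (nonempty_ball.2 hr) hg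
  rw [frontier_ball c hr.ne'] at hz
  rw [closure_ball c hr.ne'] at hmax
  exact ⟨z, hz, hmax⟩

theorem extendFn_of_mem (f : C(K, ℂ)) {z : ℂ} (hz : z ∈ K) : extendFn f z = f ⟨z, hz⟩ := by
  simp [extendFn, hz]

theorem continuousOn_extendFn (f : C(K, ℂ)) : ContinuousOn (extendFn f) K := by
  rw [continuousOn_iff_continuous_domRestrict]
  convert f.continuous using 1
  funext z
  exact extendFn_of_mem f z.2

theorem diffContOnCl_extendFn (f : E) : DiffContOnCl ℂ (extendFn f) (ball 1 (1/2)) := by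
  have hint : interior K = ball 1 (1/2) := interior_closedBall 1 (by norm_num)
  refine ⟨hint ▸ f.2, ?_⟩
  rw [closure_ball 1 (by norm_num)]
  exact continuousOn_extendFn f

theorem exists_mem_sphere_norm_eq (f : E) :
    ∃ z : K, dist (z : ℂ) 1 = 1/2 ∧ ‖f‖ = ‖(f : C(K, ℂ)) z‖ := by
  obtain ⟨z, hz, hmax⟩ := exists_mem_sphere_isMaxOn_norm (by norm_num) (diffContOnCl_extendFn f)
  have hzK : z ∈ K := sphere_subset_closedBall hz
  refine ⟨⟨z, hzK⟩, hz, le_antisymm ?_ (ContinuousMap.norm_coe_le_norm _ _)⟩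
  refine (ContinuousMap.norm_le _ (norm_nonneg _)).2 fun w => ?_
  simpa [extendFn_of_mem _ w.2, extendFn_of_mem _ hzK] using hmax w.2

theorem norm_one_sub_le (z : K) : ‖1 - (z : ℂ)‖ ≤ 1/2 := by
  rw [← dist_eq_norm, dist_comm]
  exact z.2

/-- For every f ∈ E, ‖f − Af‖ = (1/2)·‖f‖. -/
theorem norm_sub_mul_eq_half (A : E →L[ℂ] E)
    (hA : ∀ (f : E) (z : K), ((A f : C(K, ℂ)) z) = (z : ℂ) * ((f : C(K, ℂ)) z)) :
    ∀ f : E, ‖f - A f‖ = (1/2) * ‖f‖ := by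
  intro f
  have hval (z : K) : ((f - A f : E) : C(K, ℂ)) z = (1 - (z : ℂ)) * (f : C(K, ℂ)) z := by
    change (f : C(K, ℂ)) z - (A f : C(K, ℂ)) z = _
    rw [hA f z]
    ring
  obtain ⟨z₀, hz₀, hmax⟩ := exists_mem_sphere_norm_eq f
  apply le_antisymm
  · change ‖((f - A f : E) : C(K, ℂ))‖ ≤ 1/2 * ‖(f : C(K, ℂ))‖
    refine (ContinuousMap.norm_le _ (by positivity)).2 fun z => ?_
    rw [hval z, norm_mul]
    exact mul_le_mul (norm_one_sub_le z) (ContinuousMap.norm_coe_le_norm _ z) (norm_nonneg _)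
      (by norm_num)
  · calc 1/2 * ‖f‖ = ‖((f - A f : E) : C(K, ℂ)) z₀‖ := by
          rw [hval z₀, norm_mul, hmax, ← dist_eq_norm, dist_comm, hz₀]
      _ ≤ ‖f - A f‖ := ContinuousMap.norm_coe_le_norm _ _
end
end

section
/- For every bounded linear operator B on E with ‖A − B‖ < 1/4, the number 1 belongs to the spectrum of B, i.e., I − B is not invertible in the algebra of bounded operators on E. -/
noncomputable section

open Metric

/-! Multiplication by `1 - z` is bounded below by `1/2` on `E` (maximum modulus principle on the
circle `|z - 1| = 1/2`), but it is not surjective, since every function in its range vanishes at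
`1`. An operator bounded below by `c` is invertible as soon as an invertible operator `S` lies
within `c / 2` of it: then `S` is bounded below by more than `c / 2`, so `‖S⁻¹‖ < 2 / c` and the
Neumann series around `S` converges. Hence `1 - B` cannot be invertible when `‖A - B‖ < 1/4`. -/

section BoundedBelow

variable {𝕜 V : Type*} [NontriviallyNormedField 𝕜] [NormedAddCommGroup V] [NormedSpace 𝕜 V]

theorem ContinuousLinearMap.bound_below_sub_norm_sub {T S : V →L[𝕜] V} {c : ℝ}
    (hT : ∀ x, c * ‖x‖ ≤ ‖T x‖) (x : V) : (c - ‖T - S‖) * ‖x‖ ≤ ‖S x‖ := by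
  have : ‖T x‖ - ‖S x‖ ≤ ‖T - S‖ * ‖x‖ :=
    (norm_sub_norm_le _ _).trans (by simpa using (T - S).le_opNorm x)
  linarith [hT x]

theorem Units.norm_inv_le_of_bound_below (u : (V →L[𝕜] V)ˣ) {c : ℝ} (hc : 0 < c)
    (hu : ∀ x, c * ‖x‖ ≤ ‖(u : V →L[𝕜] V) x‖) : ‖(↑u⁻¹ : V →L[𝕜] V)‖ ≤ c⁻¹ := by
  refine ContinuousLinearMap.opNorm_le_bound _ (inv_nonneg.mpr hc.le) fun y => ?_
  have hy : (u : V →L[𝕜] V) ((↑u⁻¹ : V →L[𝕜] V) y) = y :=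
    ContinuousLinearMap.ext_iff.mp u.mul_inv y
  rw [inv_mul_eq_div, le_div_iff₀ hc, mul_comm]
  simpa only [hy] using hu ((↑u⁻¹ : V →L[𝕜] V) y)

theorem ContinuousLinearMap.isUnit_of_bound_below_of_norm_sub_lt [CompleteSpace V]
    {T S : V →L[𝕜] V} {c : ℝ} (hT : ∀ x, c * ‖x‖ ≤ ‖T x‖) (hS : IsUnit S)
    (hTS : ‖T - S‖ < c / 2) : IsUnit T := by
  nontriviality V →L[𝕜] V
  obtain ⟨u, rfl⟩ := hS
  have hpos : 0 < c - ‖T - u‖ := by linarith [norm_nonneg (T - u)]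
  have hinv := u.norm_inv_le_of_bound_below hpos (bound_below_sub_norm_sub hT)
  have hnear : ‖T - u‖ < ‖(↑u⁻¹ : V →L[𝕜] V)‖⁻¹ :=
    calc ‖T - u‖ < c - ‖T - u‖ := by linarith
      _ = (c - ‖T - u‖)⁻¹⁻¹ := (inv_inv _).symm
      _ ≤ ‖(↑u⁻¹ : V →L[𝕜] V)‖⁻¹ := inv_anti₀ (norm_pos_iff.mpr (u⁻¹).ne_zero) hinv
  exact (u.ofNearby T hnear).isUnit

theorem ContinuousLinearMap.not_isUnit_one_sub_of_norm_sub_lt [CompleteSpace V]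
    {A B : V →L[𝕜] V} {c : ℝ} (hA : ∀ x, c * ‖x‖ ≤ ‖(1 - A) x‖) (hA_not_unit : ¬ IsUnit (1 - A))
    (hAB : ‖A - B‖ < c / 2) : ¬ IsUnit (1 - B) := fun hB =>
  hA_not_unit <| isUnit_of_bound_below_of_norm_sub_lt hA hB <| by
    rwa [sub_sub_sub_cancel_left, norm_sub_rev]

end BoundedBelow

theorem one_mem_K : (1 : ℂ) ∈ K := mem_closedBall_self (by norm_num)

theorem interior_K : interior K = ball 1 (1/2) := interior_closedBall _ (by norm_num)

theorem closure_ball_eq_K : closure (ball (1 : ℂ) (1/2)) = K := closure_ball _ (by norm_num)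

theorem extendFn_apply (f : C(K, ℂ)) (z : K) : extendFn f z = f z := by
  simp [extendFn, z.2]

/-- Weierstrass: a uniform limit of holomorphic functions is holomorphic. -/
theorem isClosed_Esub : IsClosed (Esub : Set C(K, ℂ)) := by
  refine IsSeqClosed.isClosed fun fn f hfn hlim => ?_
  have hK : TendstoUniformlyOn (fun n => extendFn (fn n)) (extendFn f) Filter.atTop K := by
    rw [Metric.tendstoUniformlyOn_iff]
    intro ε hε
    filter_upwards [Metric.tendstoUniformly_iff.mp
      (ContinuousMap.tendsto_iff_tendstoUniformly.mp hlim) ε hε] with n hn z hz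
    simpa only [extendFn_apply _ ⟨z, hz⟩] using hn ⟨z, hz⟩
  exact (hK.mono interior_subset).tendstoLocallyUniformlyOn.differentiableOn
    (Filter.Eventually.of_forall hfn) isOpen_interior

instance : CompleteSpace E := isClosed_Esub.completeSpace_coe

theorem norm_le_of_forall_norm_sub_one_eq_half (f : E) {C : ℝ} (hC : 0 ≤ C)
    (h : ∀ z : K, ‖(z : ℂ) - 1‖ = 1/2 → ‖(f : C(K, ℂ)) z‖ ≤ C) : ‖f‖ ≤ C := by
  refine (ContinuousMap.norm_le _ hC).mpr fun z => ?_
  rw [← extendFn_apply]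
  refine Complex.norm_le_of_forall_mem_frontier_norm_le isBounded_ball (diffContOnCl_extendFn f)
    (fun w hw => ?_) (by simpa only [closure_ball_eq_K] using z.2)
  rw [frontier_ball _ (by norm_num), mem_sphere_iff_norm] at hw
  have hwK : w ∈ K := mem_closedBall_iff_norm.mpr hw.le
  simpa only [extendFn_apply _ ⟨w, hwK⟩] using h ⟨w, hwK⟩ hw

section MultiplicationByZ

variable {A : E →L[ℂ] E}
  (hA : ∀ (f : E) (z : K), ((A f : C(K, ℂ)) z) = (z : ℂ) * ((f : C(K, ℂ)) z))
include hA

theorem one_sub_apply_apply (f : E) (z : K) :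
    ((((1 : E →L[ℂ] E) - A) f : E) : C(K, ℂ)) z = (1 - z) * (f : C(K, ℂ)) z := by
  simp [hA, sub_mul]

/-- On the boundary circle `|1 - z| = 1/2`, so the maximum modulus principle applies. -/
theorem half_mul_norm_le_norm_one_sub_apply (f : E) :
    1/2 * ‖f‖ ≤ ‖((1 : E →L[ℂ] E) - A) f‖ := by
  suffices ‖f‖ ≤ 2 * ‖((1 : E →L[ℂ] E) - A) f‖ by linarith
  refine norm_le_of_forall_norm_sub_one_eq_half f (by positivity) fun z hz => ?_
  have hg := ContinuousMap.norm_coe_le_norm ((((1 : E →L[ℂ] E) - A) f : E) : C(K, ℂ)) z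
  rw [one_sub_apply_apply hA, norm_mul, norm_sub_rev, hz, ← Submodule.coe_norm] at hg
  linarith

/-- `oneE` is not in the range: every function in it vanishes at `1`. -/
theorem not_isUnit_one_sub : ¬ IsUnit ((1 : E →L[ℂ] E) - A) := by
  intro h
  obtain ⟨f, hf⟩ := (ContinuousLinearMap.isUnit_iff_bijective.mp h).2 oneE
  have h1 := one_sub_apply_apply hA f ⟨1, one_mem_K⟩
  rw [hf] at h1
  simp [oneE] at h1

end MultiplicationByZ

/-- If ‖A − B‖ < 1/4 then 1 ∈ σ(B), i.e., I − B is not invertible in the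
algebra of bounded operators on E. -/
theorem one_mem_spectrum_of_close (A : E →L[ℂ] E)
    (hA : ∀ (f : E) (z : K), ((A f : C(K, ℂ)) z) = (z : ℂ) * ((f : C(K, ℂ)) z))
    (B : E →L[ℂ] E) (hB : ‖A - B‖ < 1/4) :
    (1 : ℂ) ∈ spectrum ℂ B ∧ ¬ IsUnit ((1 : E →L[ℂ] E) - B) := by
  have hB_not_unit : ¬ IsUnit ((1 : E →L[ℂ] E) - B) :=
    ContinuousLinearMap.not_isUnit_one_sub_of_norm_sub_lt
      (half_mul_norm_le_norm_one_sub_apply hA) (not_isUnit_one_sub hA) (by linarith)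
  exact ⟨by simpa [spectrum.mem_iff] using hB_not_unit, hB_not_unit⟩
end
end
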